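/- For any composition η = (η_1,...,η_r) of n, the rational function W_η(x,y) = (Σ_{w∈S_η} x^{maj(w)} y^{des(w)}) / Π_{j=0}^{n-1}(1 − x^j y) satisfies W_η(x,y) = (1 − x^n y) · ⊛_{i=1}^r Π_{j=0}^{η_i} (1 − x^j y)^{-1}, where ⊛ denotes the Hadamard product with respect to y. -/

import Mathlib

open Finset

noncomputable section
open scoped Classical

/-- 0-based block index of position `i` (0-based) with respect to the composition
`η` with `r` parts: the number of complete blocks that end at or before position `i`. -/
def blk (r : ℕ) (η : ℕ → ℕ) (i : ℕ) : ℕ :=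
  ((Finset.range r).filter (fun k => ∑ j ∈ Finset.range (k + 1), η j ≤ i)).card

/-- Descent set of a word of length `n` (0-based positions `i` with `w i > w (i+1)`). -/
def desSet (n : ℕ) (w : Fin n → ℕ) : Finset (Fin n) :=
  Finset.univ.filter (fun i => ∃ h : i.1 + 1 < n, w ⟨i.1 + 1, h⟩ < w i)

/-- Descent number. -/
def des (n : ℕ) (w : Fin n → ℕ) : ℕ := (desSet n w).card

/-- Major index (descents counted in 1-based positions). -/
def maj (n : ℕ) (w : Fin n → ℕ) : ℕ := ∑ i ∈ desSet n w, (i.1 + 1)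

/-- Excedance set of a word w.r.t. the trivial word of `η`. -/
def excSet (r : ℕ) (η : ℕ → ℕ) (n : ℕ) (w : Fin n → ℕ) : Finset (Fin n) :=
  Finset.univ.filter (fun i => blk r η i.1 < w i)

/-- Excedance number. -/
def exc (r : ℕ) (η : ℕ → ℕ) (n : ℕ) (w : Fin n → ℕ) : ℕ := (excSet r η n w).card

/-- Weak inversions of the exceeding subword. -/
def imvE (r : ℕ) (η : ℕ → ℕ) (n : ℕ) (w : Fin n → ℕ) : ℕ :=
  (Finset.univ.filter (fun p : Fin n × Fin n => p.1 < p.2 ∧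
    blk r η p.1.1 < w p.1 ∧ blk r η p.2.1 < w p.2 ∧ w p.2 ≤ w p.1)).card

/-- Inversions of the non-exceeding subword. -/
def invN (r : ℕ) (η : ℕ → ℕ) (n : ℕ) (w : Fin n → ℕ) : ℕ :=
  (Finset.univ.filter (fun p : Fin n × Fin n => p.1 < p.2 ∧
    ¬ blk r η p.1.1 < w p.1 ∧ ¬ blk r η p.2.1 < w p.2 ∧ w p.2 < w p.1)).card

/-- Han's Denert statistic on multiset permutations. -/
def denh (r : ℕ) (η : ℕ → ℕ) (n : ℕ) (w : Fin n → ℕ) : ℕ :=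
  (∑ i ∈ excSet r η n w, (i.1 + 1)) + imvE r η n w + invN r η n w

/-- The set `S_η` of multiset permutations: all rearrangements of the trivial word. -/
def msetPerms (r : ℕ) (η : ℕ → ℕ) (n : ℕ) : Finset (Fin n → ℕ) :=
  (Finset.univ : Finset (Equiv.Perm (Fin n))).image (fun σ i => blk r η (σ i).1)

/-- `η`-admissible permutations: `Des(σ) ⊆ Des(η)`. -/
def admissible (r : ℕ) (η : ℕ → ℕ) (n : ℕ) (σ : Equiv.Perm (Fin n)) : Prop :=
  ∀ i : Fin n, ∀ h : i.1 + 1 < n, σ ⟨i.1 + 1, h⟩ < σ i → blk r η i.1 < blk r η (i.1 + 1)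

/-- The multiset permutation `π_η(σ⁻¹)` associated with `σ ∈ S_n`. -/
def wordOf (r : ℕ) (η : ℕ → ℕ) (n : ℕ) (σ : Equiv.Perm (Fin n)) : Fin n → ℕ :=
  fun j => blk r η ((σ⁻¹ j).1)

/-- The set `I_σ = {j : π_η(σ⁻¹(j)) > π_η(j)}`. -/
def Iset (r : ℕ) (η : ℕ → ℕ) (n : ℕ) (σ : Equiv.Perm (Fin n)) : Finset (Fin n) :=
  Finset.univ.filter (fun j => blk r η j.1 < blk r η ((σ⁻¹ j).1))

def iexc (r : ℕ) (η : ℕ → ℕ) (n : ℕ) (σ : Equiv.Perm (Fin n)) : ℕ := (Iset r η n σ).card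

/-- `N⁺_σ`. -/
def Nplus (r : ℕ) (η : ℕ → ℕ) (n : ℕ) (σ : Equiv.Perm (Fin n)) : Finset (Fin n × Fin n) :=
  Finset.univ.filter (fun p => blk r η p.1.1 ≤ blk r η p.2.1 ∧ σ p.1 < p.2 ∧ σ⁻¹ p.2 < p.1)

/-- `N⁻_σ`. -/
def Nminus (r : ℕ) (η : ℕ → ℕ) (n : ℕ) (σ : Equiv.Perm (Fin n)) : Finset (Fin n × Fin n) :=
  Finset.univ.filter (fun p => blk r η p.2.1 < blk r η p.1.1 ∧ σ p.1 < p.2 ∧ p.1 < σ⁻¹ p.2)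

/-- Denert's statistic. -/
def den (r : ℕ) (η : ℕ → ℕ) (n : ℕ) (σ : Equiv.Perm (Fin n)) : ℤ :=
  (∑ j ∈ Iset r η n σ, (j.1 + 1) : ℕ) + (Nplus r η n σ).card - (Nminus r η n σ).card
    - iexc r η n σ


/-!
Expanding every `(1 - xʲy)⁻¹` as a geometric series, the `y^k`-coefficient of
`∏_{j=0}^{m} (1 - xʲy)⁻¹` is the sum of `x^{Σ g}` over antitone `g : Fin m → {0, …, k}`. Hence,
after dividing both sides by `1 - xⁿy`, the right-hand side at `y^k` sums `x^{Σ g}` over the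
functions `g ≤ k` on the `n` positions that are antitone on each block of `η`. Sorting the
positions by decreasing `g`, ties broken by increasing block, turns such a `g` into a pair
`(w, f)`: a rearrangement `w ∈ S_η` of the block word and an antitone `f ≤ k` that drops strictly
at every descent of `w`. Subtracting from `f` the number of descents of `w` at or after each
position leaves an arbitrary antitone function bounded by `k - des w`, while the subtracted
function sums to `maj w`; this is the `y^k`-coefficient of the left-hand side.
-/

open PowerSeries

theorem Fin.monotone_of_le_succ {α : Type*} [Preorder α] {n : ℕ} {f : Fin n → α}
    (h : ∀ (i : Fin n) (hi : i.1 + 1 < n), f i ≤ f ⟨i.1 + 1, hi⟩) : Monotone f := by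
  cases n with
  | zero => exact fun i => i.elim0
  | succ n => exact Fin.monotone_iff_le_succ.2 fun i => h i.castSucc (by simp)

theorem Fin.antitone_cons_iff {α : Type*} [Preorder α] {n : ℕ} {a : α} {f : Fin n → α} :
    Antitone (Fin.cons a f : Fin (n + 1) → α) ↔ (∀ i, f i ≤ a) ∧ Antitone f := by
  simpa only [antitone_iff_forall_lt, Relator.LiftFun, ge_iff_le] using
    Fin.liftFun_cons (α := α) (· ≥ ·) (a := a) (f := f)

namespace Tuple
variable {n : ℕ} {α : Type*} [LinearOrder α]

theorem sort_symm_lt_sort_symm_iff (f : Fin n → α) (i j : Fin n) :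
    (sort f).symm i < (sort f).symm j ↔ toLex (f i, i) < toLex (f j, j) := by
  have h := ((eq_sort_iff'.1 (rfl : sort f = sort f)).lt_iff_lt (a := (sort f).symm i)
    (b := (sort f).symm j)).symm
  simp only [Equiv.trans_apply, Equiv.apply_symm_apply] at h
  exact h

theorem comp_sort_eq_of_monotone {b : Fin n → α} (hb : Monotone b) (σ : Equiv.Perm (Fin n)) :
    (b ∘ σ) ∘ sort (b ∘ σ) = b := by
  rw [comp_perm_comp_sort_eq_comp_sort, sort_eq_refl_iff_monotone.2 hb]
  rfl

theorem comp_symm_sort_eq_of_monotone {b : Fin n → α} (hb : Monotone b)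
    (σ : Equiv.Perm (Fin n)) : b ∘ (sort (b ∘ σ)).symm = b ∘ σ :=
  calc b ∘ (sort (b ∘ σ)).symm = ((b ∘ σ) ∘ sort (b ∘ σ)) ∘ (sort (b ∘ σ)).symm := by
        rw [comp_sort_eq_of_monotone hb]
    _ = b ∘ σ := by ext; simp

end Tuple

theorem PowerSeries.mk_pow_mul_one_sub_C_mul_X {R : Type*} [CommRing R] (c : R) :
    mk (c ^ ·) * (1 - C c * X) = 1 := by
  simpa [map_sub, rescale_X, rescale_mk, mul_comm] using
    congrArg (rescale c) (mk_one_mul_one_sub_eq_one R)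

theorem PowerSeries.inv_prod_one_sub_C_mul_X {F ι : Type*} [Field F] (a : ι → F) (s : Finset ι) :
    (∏ j ∈ s, (1 - C (a j) * X))⁻¹ = ∏ j ∈ s, mk (a j ^ ·) := by
  rw [PowerSeries.inv_eq_iff_mul_eq_one (by simp [map_prod]), ← prod_mul_distrib]
  exact prod_eq_one fun j _ => mk_pow_mul_one_sub_C_mul_X (a j)

def boundedAntitone (m k : ℕ) : Finset (Fin m → ℕ) :=
  {g ∈ Fintype.piFinset fun _ => range (k + 1) | Antitone g}

theorem mem_boundedAntitone {m k : ℕ} {g : Fin m → ℕ} :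
    g ∈ boundedAntitone m k ↔ (∀ i, g i ≤ k) ∧ Antitone g := by
  simp [boundedAntitone]

section
variable {R : Type*} [CommSemiring R]

theorem sum_boundedAntitone_zero (x : R) (k : ℕ) :
    ∑ g ∈ boundedAntitone 0 k, x ^ ∑ i, g i = 1 := by
  have hmem : Fin.elim0 ∈ boundedAntitone 0 k :=
    mem_boundedAntitone.2 ⟨fun i => i.elim0, fun i => i.elim0⟩
  rw [sum_eq_single_of_mem _ hmem fun g _ hg => absurd (Subsingleton.elim g _) hg]
  simp

theorem sum_boundedAntitone_succ (x : R) (m k : ℕ) :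
    ∑ g ∈ boundedAntitone (m + 1) k, x ^ ∑ i, g i =
      ∑ t ∈ range (k + 1), x ^ t * ∑ g ∈ boundedAntitone m t, x ^ ∑ i, g i := by
  simp_rw [mul_sum, ← pow_add]
  rw [sum_sigma']
  refine sum_nbij' (fun g => ⟨g 0, Fin.tail g⟩) (fun p => Fin.cons p.1 p.2) ?_ ?_ ?_ ?_ ?_
  · intro g hg
    rw [mem_boundedAntitone, ← Fin.cons_self_tail g, Fin.antitone_cons_iff] at hg
    simp only [mem_sigma, mem_range, Nat.lt_succ_iff, mem_boundedAntitone]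
    exact ⟨by simpa using hg.1 0, hg.2.1, hg.2.2⟩
  · rintro ⟨t, g⟩ h
    simp only [mem_sigma, mem_range, Nat.lt_succ_iff, mem_boundedAntitone] at h
    simp only [mem_boundedAntitone, Fin.antitone_cons_iff, Fin.forall_fin_succ,
      Fin.cons_zero, Fin.cons_succ]
    exact ⟨⟨h.1, fun i => (h.2.1 i).trans h.1⟩, h.2.1, h.2.2⟩
  · intro g _; simp
  · intro p _; simp
  · intro g _; simp [Fin.sum_univ_succ, Fin.tail]

theorem coeff_prod_mk_pow_eq_sum_boundedAntitone (x : R) (m k : ℕ) :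
    coeff k (∏ j ∈ range (m + 1), mk ((x ^ j) ^ ·)) =
      ∑ g ∈ boundedAntitone m k, x ^ ∑ i, g i := by
  induction m generalizing k with
  | zero => rw [sum_boundedAntitone_zero]; simp
  | succ m ih =>
    have : ∏ j ∈ range (m + 1), mk ((x ^ (j + 1)) ^ ·) =
        rescale x (∏ j ∈ range (m + 1), mk ((x ^ j) ^ ·)) := by
      simp [map_prod, rescale_mk, pow_succ, mul_pow, ← pow_mul, mul_comm]
    rw [prod_range_succ', this, sum_boundedAntitone_succ, coeff_mul,
      Nat.sum_antidiagonal_eq_sum_range_succ_mk]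
    refine sum_congr rfl fun t _ => ?_
    rw [coeff_rescale, ih]
    simp

end

theorem coeff_inv_prod_one_sub_C_pow_mul_X {F : Type*} [Field F] (x : F) (m k : ℕ) :
    coeff k (∏ j ∈ range (m + 1), (1 - C (x ^ j) * X))⁻¹ =
      ∑ g ∈ boundedAntitone m k, x ^ ∑ i, g i := by
  rw [inv_prod_one_sub_C_mul_X, coeff_prod_mk_pow_eq_sum_boundedAntitone]

section
variable {n : ℕ}

def sortKey (f w : Fin n → ℕ) (p : Fin n) : ℕᵒᵈ ×ₗ ℕ := toLex (OrderDual.toDual (f p), w p)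

def desAbove (w : Fin n → ℕ) (p : Fin n) : ℕ := #{d ∈ desSet n w | p ≤ d}

theorem mem_desSet {w : Fin n → ℕ} {i : Fin n} (hi : i.1 + 1 < n) :
    i ∈ desSet n w ↔ w ⟨i.1 + 1, hi⟩ < w i := by
  simp [desSet, hi]

theorem desAbove_zero (w : Fin n → ℕ) (hn : 0 < n) : desAbove w ⟨0, hn⟩ = des n w := by
  rw [desAbove, des, filter_true_of_mem fun d _ => Fin.le_def.2 (Nat.zero_le d.1)]

theorem desAbove_le_des (w : Fin n → ℕ) (p : Fin n) : desAbove w p ≤ des n w :=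
  card_filter_le _ _

theorem desAbove_eq_succ_add {w : Fin n → ℕ} {i : Fin n} (hi : i.1 + 1 < n) :
    desAbove w i = desAbove w ⟨i.1 + 1, hi⟩ + if i ∈ desSet n w then 1 else 0 := by
  simp only [desAbove, card_filter, ← sum_ite_eq' (desSet n w) i (fun _ => 1), ← sum_add_distrib]
  refine sum_congr rfl fun d _ => ?_
  simp only [Fin.le_def, Fin.ext_iff]
  split_ifs <;> omega

theorem sum_desAbove (w : Fin n → ℕ) : ∑ p, desAbove w p = maj n w := by
  simp only [desAbove, card_filter, maj]
  rw [sum_comm]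
  refine sum_congr rfl fun d _ => ?_
  rw [← card_filter, filter_ge_eq_Iic, Fin.card_Iic]

theorem sortKey_le_succ_iff {f w : Fin n → ℕ} {i : Fin n} (hi : i.1 + 1 < n) :
    sortKey f w i ≤ sortKey f w ⟨i.1 + 1, hi⟩ ↔
      f ⟨i.1 + 1, hi⟩ + (if i ∈ desSet n w then 1 else 0) ≤ f i := by
  simp only [sortKey, Prod.Lex.toLex_le_toLex, OrderDual.toDual_lt_toDual, OrderDual.toDual_inj,
    mem_desSet hi]
  split_ifs <;> omega

theorem monotone_sortKey_iff {f w : Fin n → ℕ} :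
    Monotone (sortKey f w) ↔ ∀ (i : Fin n) (hi : i.1 + 1 < n),
      f ⟨i.1 + 1, hi⟩ + (if i ∈ desSet n w then 1 else 0) ≤ f i := by
  simp only [← sortKey_le_succ_iff]
  exact ⟨fun h i hi => h (Fin.le_def.2 (Nat.le_succ _)), Fin.monotone_of_le_succ⟩

theorem antitone_of_monotone_sortKey {f w : Fin n → ℕ} (h : Monotone (sortKey f w)) :
    Antitone f :=
  fun _ _ hpq => OrderDual.toDual_le_toDual.1 (Prod.Lex.monotone_fst _ _ (h hpq))

theorem desAbove_le_of_monotone_sortKey {f w : Fin n → ℕ} (h : Monotone (sortKey f w)) :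
    desAbove w ≤ f := by
  intro p
  have hstrict : ∀ d ∈ desSet n w, ∀ d', d < d' → f d' < f d := fun d hd d' hdd' => by
    obtain ⟨hd1, hlt⟩ := (mem_filter.1 hd).2
    have hstep := monotone_sortKey_iff.1 h d hd1
    rw [if_pos hd] at hstep
    have := antitone_of_monotone_sortKey h
      (show (⟨d.1 + 1, hd1⟩ : Fin n) ≤ d' from Fin.le_def.2 hdd')
    omega
  calc desAbove w p ≤ #(Icc 1 (f p)) := by
        refine card_le_card_of_injOn f (fun d hd => ?_) fun d hd d' hd' hf => ?_
        · obtain ⟨hdD, hpd⟩ := mem_filter.1 hd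
          obtain ⟨hd1, -⟩ := (mem_filter.1 hdD).2
          have := hstrict d hdD ⟨d.1 + 1, hd1⟩ (Fin.lt_def.2 (Nat.lt_succ_self _))
          simp only [coe_Icc, Set.mem_Icc]
          exact ⟨by omega, antitone_of_monotone_sortKey h hpd⟩
        · rcases lt_trichotomy d d' with hlt | heq | hgt
          · exact absurd hf (hstrict d (mem_filter.1 hd).1 d' hlt).ne'
          · exact heq
          · exact absurd hf (hstrict d' (mem_filter.1 hd').1 d hgt).ne
    _ = f p := by simp

theorem monotone_sortKey_add_desAbove_iff {μ w : Fin n → ℕ} :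
    Monotone (sortKey (μ + desAbove w) w) ↔ Antitone μ := by
  rw [monotone_sortKey_iff, ← monotone_toDual_comp_iff]
  refine ⟨fun h => Fin.monotone_of_le_succ fun i hi => ?_, fun h i hi => ?_⟩
  · have := h i hi
    rw [Pi.add_apply, Pi.add_apply, desAbove_eq_succ_add hi] at this
    exact OrderDual.toDual_le_toDual.2 (by omega)
  · have : μ ⟨i.1 + 1, hi⟩ ≤ μ i := h (Fin.le_def.2 (Nat.le_succ i.1))
    rw [Pi.add_apply, Pi.add_apply, desAbove_eq_succ_add hi]
    omega

-- `Monotone (sortKey f w)` says that `f` is antitone and drops strictly at every descent of `w`.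
def compatible (w : Fin n → ℕ) (k : ℕ) : Finset (Fin n → ℕ) :=
  {f ∈ Fintype.piFinset fun _ => range (k + 1) | Monotone (sortKey f w)}

theorem mem_compatible {w f : Fin n → ℕ} {k : ℕ} :
    f ∈ compatible w k ↔ (∀ p, f p ≤ k) ∧ Monotone (sortKey f w) := by
  simp [compatible]

theorem sum_compatible {R : Type*} [CommSemiring R] (x : R) (w : Fin n → ℕ) (k : ℕ) :
    ∑ f ∈ compatible w k, x ^ ∑ p, f p =
      if des n w ≤ k then x ^ maj n w * ∑ μ ∈ boundedAntitone n (k - des n w), x ^ ∑ p, μ p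
      else 0 := by
  split_ifs with hk
  · rw [mul_sum]
    symm
    refine sum_nbij' (· + desAbove w) (· - desAbove w) (fun μ hμ => ?_) (fun f hf => ?_)
      (fun μ _ => add_tsub_cancel_right μ _) (fun f hf => ?_) (fun μ _ => ?_)
    · rw [mem_boundedAntitone] at hμ
      rw [mem_compatible, monotone_sortKey_add_desAbove_iff]
      refine ⟨fun p => ?_, hμ.2⟩
      have := hμ.1 p
      have := desAbove_le_des w p
      simp only [Pi.add_apply]
      omega
    · rw [mem_compatible] at hf
      have hle := desAbove_le_of_monotone_sortKey hf.2
      have hanti : Antitone (f - desAbove w) := by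
        rw [← monotone_sortKey_add_desAbove_iff, tsub_add_cancel_of_le hle]
        exact hf.2
      refine mem_boundedAntitone.2 ⟨fun p => ?_, hanti⟩
      have hn : 0 < n := p.pos
      have h0 := hanti (Fin.le_def.2 (Nat.zero_le p.1) : (⟨0, hn⟩ : Fin n) ≤ p)
      have := hf.1 ⟨0, hn⟩
      have := desAbove_zero w hn
      simp only [Pi.sub_apply] at h0 ⊢
      omega
    · exact tsub_add_cancel_of_le (desAbove_le_of_monotone_sortKey (mem_compatible.1 hf).2)
    · simp only [← pow_add, Pi.add_apply, sum_add_distrib, sum_desAbove, add_comm]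
  · refine sum_eq_zero fun f hf => absurd hf fun hf => hk ?_
    rw [mem_compatible] at hf
    obtain ⟨d, -⟩ := card_pos.1 (show 0 < des n w by omega)
    rw [← desAbove_zero w d.pos]
    exact (desAbove_le_of_monotone_sortKey hf.2 _).trans (hf.1 _)

def fiberAntitone (b : Fin n → ℕ) (k : ℕ) : Finset (Fin n → ℕ) :=
  {g ∈ Fintype.piFinset fun _ => range (k + 1) | ∀ p q, p ≤ q → b p = b q → g q ≤ g p}

theorem mem_fiberAntitone {b g : Fin n → ℕ} {k : ℕ} :
    g ∈ fiberAntitone b k ↔ (∀ p, g p ≤ k) ∧ ∀ p q, p ≤ q → b p = b q → g q ≤ g p := by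
  simp [fiberAntitone]

theorem sort_comp_sort_sortKey_eq_symm {b g : Fin n → ℕ} (hb : Monotone b)
    (hg : ∀ p q, p ≤ q → b p = b q → g q ≤ g p) :
    Tuple.sort (b ∘ Tuple.sort (sortKey g b)) = (Tuple.sort (sortKey g b)).symm := by
  refine (Tuple.eq_sort_iff.2 ⟨by simpa [Function.comp_def] using hb, fun i j hij hbij => ?_⟩).symm
  simp only [Function.comp_apply, Equiv.apply_symm_apply] at hbij
  have hkey : sortKey g b i ≤ sortKey g b j := by
    have := hg i j hij.le hbij
    simp only [sortKey, Prod.Lex.toLex_le_toLex, OrderDual.toDual_lt_toDual,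
      OrderDual.toDual_inj, hbij]
    omega
  rw [Tuple.sort_symm_lt_sort_symm_iff, Prod.Lex.toLex_lt_toLex]
  exact hkey.lt_or_eq.imp id fun h => ⟨h, hij⟩

theorem sort_sortKey_comp_sort_eq_symm {b f : Fin n → ℕ} (hb : Monotone b) (σ : Equiv.Perm (Fin n))
    (hf : Monotone (sortKey f (b ∘ σ))) :
    Tuple.sort (sortKey (f ∘ Tuple.sort (b ∘ σ)) b) = (Tuple.sort (b ∘ σ)).symm := by
  set ρ := Tuple.sort (b ∘ σ)
  have hkey : sortKey (f ∘ ρ) b ∘ ρ.symm = sortKey f (b ∘ σ) := by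
    ext p : 1
    have := congrFun (Tuple.comp_symm_sort_eq_of_monotone hb σ) p
    simp only [Function.comp_apply] at this
    simpa [sortKey] using this
  refine (Tuple.eq_sort_iff.2 ⟨hkey ▸ hf, fun i j hij hkij => ?_⟩).symm
  rw [← Function.comp_apply (f := sortKey (f ∘ ρ) b),
    ← Function.comp_apply (f := sortKey (f ∘ ρ) b) (x := j), hkey] at hkij
  rw [Tuple.sort_symm_lt_sort_symm_iff, Prod.Lex.toLex_lt_toLex]
  exact Or.inr ⟨congrArg (fun z => (ofLex z).2) hkij, hij⟩

theorem sum_fiberAntitone_eq_sum_sum_compatible {R : Type*} [CommSemiring R] {b : Fin n → ℕ}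
    (hb : Monotone b) (x : R) (k : ℕ) :
    ∑ g ∈ fiberAntitone b k, x ^ ∑ p, g p =
      ∑ w ∈ univ.image (fun σ : Equiv.Perm (Fin n) => b ∘ σ),
        ∑ f ∈ compatible w k, x ^ ∑ p, f p := by
  rw [sum_sigma']
  refine sum_nbij' (fun g => ⟨b ∘ Tuple.sort (sortKey g b), g ∘ Tuple.sort (sortKey g b)⟩)
    (fun p => p.2 ∘ Tuple.sort p.1) (fun g hg => ?_) (fun p hp => ?_) (fun g hg => ?_)
    (fun p hp => ?_) (fun g _ => ?_)
  · rw [mem_fiberAntitone] at hg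
    refine mem_sigma.2 ⟨mem_image_of_mem _ (mem_univ _), mem_compatible.2 ⟨fun p => hg.1 _, ?_⟩⟩
    exact Tuple.monotone_sort (sortKey g b)
  · obtain ⟨w, f⟩ := p
    obtain ⟨hw, hf⟩ := mem_sigma.1 hp
    obtain ⟨σ, -, rfl⟩ := mem_image.1 hw
    rw [mem_compatible] at hf
    have hsorted := Tuple.comp_sort_eq_of_monotone hb σ
    have hties := (Tuple.eq_sort_iff.1 (rfl : Tuple.sort (b ∘ σ) = _)).2
    refine mem_fiberAntitone.2 ⟨fun p => hf.1 _, fun p q hpq hbpq => ?_⟩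
    refine antitone_of_monotone_sortKey hf.2 ?_
    rcases hpq.lt_or_eq with hlt | rfl
    · refine (hties p q hlt ?_).le
      rw [← Function.comp_apply (f := b ∘ σ), ← Function.comp_apply (f := b ∘ σ) (x := q),
        hsorted, hbpq]
    · exact le_rfl
  · ext p
    simp [sort_comp_sort_sortKey_eq_symm hb (mem_fiberAntitone.1 hg).2]
  · obtain ⟨w, f⟩ := p
    obtain ⟨hw, hf⟩ := mem_sigma.1 hp
    obtain ⟨σ, -, rfl⟩ := mem_image.1 hw
    simp only [sort_sortKey_comp_sort_eq_symm hb σ (mem_compatible.1 hf).2,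
      Tuple.comp_symm_sort_eq_of_monotone hb σ, Function.comp_assoc, Equiv.self_comp_symm,
      Function.comp_id]
  · exact congrArg (x ^ ·) (Equiv.sum_comp _ g).symm

end

theorem blk_monotone (r : ℕ) (η : ℕ → ℕ) : Monotone (blk r η) := fun _ _ hij =>
  card_le_card (monotone_filter_right _ fun _ _ h => h.trans hij)

theorem blk_sum_range_add {r : ℕ} {η : ℕ → ℕ} {i j : ℕ} (hi : i < r) (hj : j < η i) :
    blk r η (∑ l ∈ range i, η l + j) = i := by
  have hmono : Monotone fun m => ∑ l ∈ range m, η l := fun a b hab =>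
    sum_le_sum_of_subset (range_subset_range.2 hab)
  suffices h : {l ∈ range r | ∑ m ∈ range (l + 1), η m ≤ ∑ l ∈ range i, η l + j} = range i by
    rw [blk, h, card_range]
  ext l
  simp only [mem_filter, mem_range]
  constructor
  · rintro ⟨-, hl⟩
    by_contra! hil
    have : ∑ m ∈ range (i + 1), η m ≤ ∑ m ∈ range (l + 1), η m := hmono (by omega)
    rw [sum_range_succ η i] at this
    omega
  · intro hl
    exact ⟨hl.trans hi, (hmono hl).trans (Nat.le_add_right _ _)⟩

def blockEquiv {n r : ℕ} {η : ℕ → ℕ} (hsum : ∑ i ∈ range r, η i = n) :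
    Fin n ≃ Σ i : Fin r, Fin (η i) :=
  (finCongr (by rw [Fin.sum_univ_eq_sum_range, hsum])).trans finSigmaFinEquiv.symm

theorem val_blockEquiv_symm {n r : ℕ} {η : ℕ → ℕ} (hsum : ∑ i ∈ range r, η i = n)
    (s : Σ i : Fin r, Fin (η i)) :
    ((blockEquiv hsum).symm s : ℕ) = ∑ l ∈ range s.1, η l + s.2 := by
  simp [blockEquiv, Fin.sum_univ_eq_sum_range (fun l => η l)]

theorem blk_blockEquiv_symm {n r : ℕ} {η : ℕ → ℕ} (hsum : ∑ i ∈ range r, η i = n)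
    (s : Σ i : Fin r, Fin (η i)) : blk r η ((blockEquiv hsum).symm s) = s.1 := by
  rw [val_blockEquiv_symm, blk_sum_range_add s.1.2 s.2.2]

theorem sum_fiberAntitone_blk_eq_prod {R : Type*} [CommSemiring R] {n r : ℕ} {η : ℕ → ℕ}
    (hsum : ∑ i ∈ range r, η i = n) (x : R) (k : ℕ) :
    ∑ g ∈ fiberAntitone (fun p : Fin n => blk r η p) k, x ^ ∑ p, g p =
      ∏ i ∈ range r, ∑ g ∈ boundedAntitone (η i) k, x ^ ∑ j, g j := by
  set e := blockEquiv hsum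
  rw [← Fin.prod_univ_eq_prod_range (fun i => ∑ g ∈ boundedAntitone (η i) k, x ^ ∑ j, g j),
    prod_univ_sum]
  refine sum_nbij' (fun g i j => g (e.symm ⟨i, j⟩)) (fun G p => G (e p).1 (e p).2)
    (fun g hg => ?_) (fun G hG => ?_) (fun g _ => by simp) (fun G _ => ?_) (fun g _ => ?_)
  · rw [mem_fiberAntitone] at hg
    rw [Fintype.mem_piFinset]
    refine fun i => mem_boundedAntitone.2 ⟨fun j => hg.1 _, fun j j' hjj' => hg.2 _ _ ?_ ?_⟩
    · rw [Fin.le_def, val_blockEquiv_symm, val_blockEquiv_symm]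
      exact Nat.add_le_add_left hjj' _
    · rw [blk_blockEquiv_symm, blk_blockEquiv_symm]
  · rw [Fintype.mem_piFinset] at hG
    rw [mem_fiberAntitone]
    refine ⟨fun p => (mem_boundedAntitone.1 (hG _)).1 _, fun p q hpq hblk => ?_⟩
    obtain ⟨⟨i, j⟩, rfl⟩ := e.symm.surjective p
    obtain ⟨⟨i', j'⟩, rfl⟩ := e.symm.surjective q
    rw [blk_blockEquiv_symm, blk_blockEquiv_symm] at hblk
    obtain rfl := Fin.ext hblk
    rw [Fin.le_def, val_blockEquiv_symm, val_blockEquiv_symm] at hpq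
    dsimp only
    rw [e.apply_symm_apply, e.apply_symm_apply]
    exact (mem_boundedAntitone.1 (hG i)).2 (Fin.le_def.2 (Nat.le_of_add_le_add_left hpq))
  · funext i j
    dsimp only
    rw [e.apply_symm_apply]
  · rw [prod_pow_eq_pow_sum, ← Fintype.sum_sigma (fun s => g (e.symm s)),
      Equiv.sum_comp e.symm g]

open PowerSeries in
theorem W_eta_hadamard_general {F : Type*} [Field F] (n r : ℕ) (η : ℕ → ℕ)
    (hsum : ∑ k ∈ Finset.range r, η k = n) (x : F) :
    (∑ w ∈ msetPerms r η n, C (x ^ maj n w) * (X : PowerSeries F) ^ des n w) *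
        (∏ j ∈ Finset.range n, (1 - C (x ^ j) * X))⁻¹
      = (1 - C (x ^ n) * X) *
        PowerSeries.mk (fun k => ∏ i ∈ Finset.range r,
          coeff k ((∏ j ∈ Finset.range (η i + 1), (1 - C (x ^ j) * X))⁻¹)) := by
  have hsplit : (∏ j ∈ range n, (1 - C (x ^ j) * X))⁻¹ =
      (∏ j ∈ range (n + 1), (1 - C (x ^ j) * X))⁻¹ * (1 - C (x ^ n) * X) := by
    rw [inv_prod_one_sub_C_mul_X, inv_prod_one_sub_C_mul_X, prod_range_succ, mul_assoc,
      mk_pow_mul_one_sub_C_mul_X, mul_one]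
  have hblk : Monotone fun p : Fin n => blk r η p := fun _ _ hpq => blk_monotone r η hpq
  suffices hcoeff : ∀ k, coeff k ((∑ w ∈ msetPerms r η n, C (x ^ maj n w) * X ^ des n w) *
      (∏ j ∈ range (n + 1), (1 - C (x ^ j) * X))⁻¹) =
        ∏ i ∈ range r, ∑ g ∈ boundedAntitone (η i) k, x ^ ∑ j, g j by
    rw [hsplit, ← mul_assoc, mul_comm (1 - _)]
    congr 1
    ext k
    rw [hcoeff, coeff_mk]
    simp_rw [coeff_inv_prod_one_sub_C_pow_mul_X]
  intro k
  calc _ = ∑ w ∈ msetPerms r η n, ∑ f ∈ compatible w k, x ^ ∑ p, f p := by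
        rw [sum_mul, map_sum]
        refine sum_congr rfl fun w _ => ?_
        rw [sum_compatible, mul_assoc, coeff_C_mul, coeff_X_pow_mul',
          coeff_inv_prod_one_sub_C_pow_mul_X, mul_ite, mul_zero]
    _ = _ := (sum_fiberAntitone_eq_sum_sum_compatible hblk x k).symm
    _ = _ := sum_fiberAntitone_blk_eq_prod hsum x k

open PowerSeries in
/-- Hadamard-product identity
`W_η(x,y) = (1 − xⁿy) ⊛_{i=1}^r (Π_{j=0}^{η_i} (1 − xʲy))⁻¹`,
as power series in `y`; the `r`-fold Hadamard product is the series whose `k`-th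
coefficient is the product of the `k`-th coefficients of the factors. -/
theorem W_eta_hadamard {F : Type*} [Field F] (n r : ℕ) (η : ℕ → ℕ)
    (hpos : ∀ k < r, 0 < η k) (hsum : ∑ k ∈ Finset.range r, η k = n) (x : F) :
    (∑ w ∈ msetPerms r η n, C (x ^ maj n w) * (X : PowerSeries F) ^ des n w) *
        (∏ j ∈ Finset.range n, (1 - C (x ^ j) * X))⁻¹
      = (1 - C (x ^ n) * X) *
        PowerSeries.mk (fun k => ∏ i ∈ Finset.range r,
          coeff k ((∏ j ∈ Finset.range (η i + 1), (1 - C (x ^ j) * X))⁻¹)) :=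
  W_eta_hadamard_general n r η hsum x
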